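/- The operators ℓ̂_A^{(5')} = (d - bγe^{s})∂_s + i[-ae^{-s} - b(αβ-γδ)e^{s} + cγ], for A = aX+bY+cZ+dT, define a Lie algebra representation of the real diamond Lie algebra on smooth complex-valued functions of s ∈ ℝ: the assignment is linear in A and satisfies ℓ̂_A∘ℓ̂_B - ℓ̂_B∘ℓ̂_A = ℓ̂_{[A,B]}. -/

import Mathlib

abbrev DiamondV : Type := ℝ × ℝ × ℝ × ℝ

def dX : DiamondV := (1, 0, 0, 0)
def dY : DiamondV := (0, 1, 0, 0)
def dZ : DiamondV := (0, 0, 1, 0)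
def dT : DiamondV := (0, 0, 0, 1)

/-- The bracket of the real diamond Lie algebra in coordinates (a,b,c,d)
w.r.t. the basis X,Y,Z,T, determined by [X,Y]=Z, [T,X]=-X, [T,Y]=Y,
[Z,X]=[Z,Y]=[T,Z]=0. -/
def dbr (A B : DiamondV) : DiamondV :=
  (A.1 * B.2.2.2 - A.2.2.2 * B.1,
   A.2.2.2 * B.2.1 - B.2.2.2 * A.2.1,
   A.1 * B.2.1 - B.1 * A.2.1,
   0)

/-- The operator ℓ̂_A^{(5')} = (d - bγe^{s})∂_s + i[-ae^{-s} - b(αβ-γδ)e^{s} + cγ]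
(multiplication), for A = aX + bY + cZ + dT, acting on complex functions of s. -/
noncomputable def ellHat5' (α β γ δ : ℝ) (A : DiamondV) (f : ℝ → ℂ) : ℝ → ℂ :=
  fun s => ((A.2.2.2 : ℂ) - (A.2.1 : ℂ) * (γ : ℂ) * Complex.exp (s : ℂ)) * deriv f s
    + Complex.I * (-(A.1 : ℂ) * Complex.exp (-(s : ℂ))
        - (A.2.1 : ℂ) * ((α * β - γ * δ : ℝ) : ℂ) * Complex.exp (s : ℂ)
        + (A.2.2.1 : ℂ) * (γ : ℂ)) * f s

lemma expR (s : ℝ) : HasDerivAt (fun s : ℝ => Complex.exp (s : ℂ)) (Complex.exp (s : ℂ)) s :=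
  (Complex.hasDerivAt_exp (s : ℂ)).comp_ofReal

lemma expNR (s : ℝ) :
    HasDerivAt (fun s : ℝ => Complex.exp (-(s : ℂ))) (-Complex.exp (-(s : ℂ))) s := by
  have h := ((Complex.hasDerivAt_exp (-(s:ℂ))).comp (s:ℂ) (hasDerivAt_neg (s:ℂ))).comp_ofReal
  simpa using h

lemma ellHat5'_hasDerivAt (α β γ δ : ℝ) (A : DiamondV) (f : ℝ → ℂ)
    (hf : ContDiff ℝ (⊤ : ℕ∞) f) (s : ℝ) :
    HasDerivAt (ellHat5' α β γ δ A f)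
      ((-(A.2.1 : ℂ) * (γ : ℂ) * Complex.exp (s : ℂ)) * deriv f s
        + ((A.2.2.2 : ℂ) - (A.2.1 : ℂ) * (γ : ℂ) * Complex.exp (s : ℂ)) * deriv (deriv f) s
        + Complex.I * ((A.1 : ℂ) * Complex.exp (-(s : ℂ))
            - (A.2.1 : ℂ) * ((α * β - γ * δ : ℝ) : ℂ) * Complex.exp (s : ℂ)) * f s
        + Complex.I * (-(A.1 : ℂ) * Complex.exp (-(s : ℂ))
            - (A.2.1 : ℂ) * ((α * β - γ * δ : ℝ) : ℂ) * Complex.exp (s : ℂ)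
            + (A.2.2.1 : ℂ) * (γ : ℂ)) * deriv f s) s := by
  have hf1 : HasDerivAt f (deriv f s) s :=
    ((hf.differentiable (by simp)) s).hasDerivAt
  have hdf : ContDiff ℝ (((⊤:ℕ∞)) : WithTop ℕ∞) (deriv f) :=
    (contDiff_infty_iff_deriv.mp (hf.of_le (by simp))).2
  have hf2 : HasDerivAt (deriv f) (deriv (deriv f) s) s :=
    ((hdf.differentiable (by norm_num)) s).hasDerivAt
  have hP : HasDerivAt (fun s : ℝ => (A.2.2.2 : ℂ) - (A.2.1 : ℂ) * (γ : ℂ) * Complex.exp (s : ℂ))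
      (-(A.2.1 : ℂ) * (γ : ℂ) * Complex.exp (s : ℂ)) s := by
    have := (hasDerivAt_const s ((A.2.2.2 : ℂ))).sub (((expR s).const_mul ((A.2.1 : ℂ) * (γ : ℂ))))
    exact this.congr_deriv (by ring)
  have hQ : HasDerivAt (fun s : ℝ => Complex.I * (-(A.1 : ℂ) * Complex.exp (-(s : ℂ))
        - (A.2.1 : ℂ) * ((α * β - γ * δ : ℝ) : ℂ) * Complex.exp (s : ℂ)
        + (A.2.2.1 : ℂ) * (γ : ℂ)))
      (Complex.I * ((A.1 : ℂ) * Complex.exp (-(s : ℂ))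
        - (A.2.1 : ℂ) * ((α * β - γ * δ : ℝ) : ℂ) * Complex.exp (s : ℂ))) s := by
    have := ((((expNR s).const_mul (-(A.1 : ℂ))).sub
        ((expR s).const_mul ((A.2.1 : ℂ) * ((α * β - γ * δ : ℝ) : ℂ)))).add
        (hasDerivAt_const s ((A.2.2.1 : ℂ) * (γ : ℂ)))).const_mul Complex.I
    exact this.congr_deriv (by ring)
  have := (hP.mul hf2).add (hQ.mul hf1)
  exact this.congr_deriv (by ring)

/-- A ↦ ℓ̂_A^{(5')} is a Lie algebra representation of the real diamond Lie
algebra on smooth complex functions of s ∈ ℝ: linear in A and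
ℓ̂_A∘ℓ̂_B - ℓ̂_B∘ℓ̂_A = ℓ̂_{[A,B]}. -/
theorem ellHat5'_representation (α β γ δ : ℝ) (hγ : γ ≠ 0) :
    (∀ (μ ν : ℝ) (A B : DiamondV) (f : ℝ → ℂ), ContDiff ℝ (⊤ : ℕ∞) f →
        ellHat5' α β γ δ (μ • A + ν • B) f
          = μ • ellHat5' α β γ δ A f + ν • ellHat5' α β γ δ B f) ∧
    (∀ (A B : DiamondV) (f : ℝ → ℂ), ContDiff ℝ (⊤ : ℕ∞) f →
        ellHat5' α β γ δ A (ellHat5' α β γ δ B f)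
            - ellHat5' α β γ δ B (ellHat5' α β γ δ A f)
          = ellHat5' α β γ δ (dbr A B) f) := by
  constructor
  · intro μ ν A B f hf
    funext s
    simp only [ellHat5', Pi.add_apply, Pi.smul_apply, Prod.fst_add, Prod.snd_add,
      Prod.smul_fst, Prod.smul_snd, smul_eq_mul, Complex.real_smul]
    push_cast
    ring
  · intro A B f hf
    funext s
    have hdA := (ellHat5'_hasDerivAt α β γ δ A f hf s).deriv
    have hdB := (ellHat5'_hasDerivAt α β γ δ B f hf s).deriv
    have hE : Complex.exp (-(s : ℂ)) = (Complex.exp (s : ℂ))⁻¹ := Complex.exp_neg _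
    have hne : Complex.exp (s : ℂ) ≠ 0 := Complex.exp_ne_zero _
    simp only [Pi.sub_apply]
    rw [show ellHat5' α β γ δ A (ellHat5' α β γ δ B f) s
        = ((A.2.2.2 : ℂ) - (A.2.1 : ℂ) * (γ : ℂ) * Complex.exp (s : ℂ))
            * deriv (ellHat5' α β γ δ B f) s
          + Complex.I * (-(A.1 : ℂ) * Complex.exp (-(s : ℂ))
              - (A.2.1 : ℂ) * ((α * β - γ * δ : ℝ) : ℂ) * Complex.exp (s : ℂ)
              + (A.2.2.1 : ℂ) * (γ : ℂ)) * ellHat5' α β γ δ B f s from rfl,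
      show ellHat5' α β γ δ B (ellHat5' α β γ δ A f) s
        = ((B.2.2.2 : ℂ) - (B.2.1 : ℂ) * (γ : ℂ) * Complex.exp (s : ℂ))
            * deriv (ellHat5' α β γ δ A f) s
          + Complex.I * (-(B.1 : ℂ) * Complex.exp (-(s : ℂ))
              - (B.2.1 : ℂ) * ((α * β - γ * δ : ℝ) : ℂ) * Complex.exp (s : ℂ)
              + (B.2.2.1 : ℂ) * (γ : ℂ)) * ellHat5' α β γ δ A f s from rfl,
      hdA, hdB]
    simp only [ellHat5', dbr]
    rw [hE]
    push_cast
    field_simp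
    ring
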